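/- arXiv:1910.09035 — 3 statements merged into one kernel-verified Lean document; each statement's English description precedes it below -/
import Mathlib

section
/- Let μ be a centered probability measure on ℝ^d satisfying an exponential concentration inequality with constant α > 0, and let T be a Brenier map sending the standard Gaussian measure γ onto μ. Then |T(x)| ≤ max(12/α, 8) · (|x|² + 17d) for every x ∈ ℝ^d. -/
open MeasureTheory Real
open scoped RealInnerProductSpace ENNReal

noncomputable section

/-- The standard Gaussian measure `γ` on `ℝ^d`, with density
`(2π)^{-d/2} e^{-|x|²/2}` with respect to Lebesgue measure. -/
def stdGaussian (d : ℕ) : Measure (EuclideanSpace ℝ (Fin d)) :=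
  volume.withDensity fun x =>
    ENNReal.ofReal ((2 * π) ^ (-(d : ℝ) / 2) * Real.exp (-‖x‖ ^ 2 / 2))

/-- A probability measure on `ℝ^d` is centered if `∫ x dμ(x) = 0`. -/
def IsCentered {d : ℕ} (μ : Measure (EuclideanSpace ℝ (Fin d))) : Prop :=
  ∫ x, x ∂μ = 0

/-- A probability measure on `ℝ^d` is isotropic if `∫ xᵢ xⱼ dμ(x) = δᵢⱼ`. -/
def IsIsotropic {d : ℕ} (μ : Measure (EuclideanSpace ℝ (Fin d))) : Prop :=
  ∀ i j : Fin d, ∫ x, x i * x j ∂μ = if i = j then 1 else 0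

/-- A measure on `ℝ^d` is log-concave if `μ = e^{-V(x)} dx` for some convex `V`. -/
def IsLogConcave {d : ℕ} (μ : Measure (EuclideanSpace ℝ (Fin d))) : Prop :=
  ∃ V : EuclideanSpace ℝ (Fin d) → ℝ, ConvexOn ℝ Set.univ V ∧
    μ = volume.withDensity fun x => ENNReal.ofReal (Real.exp (-V x))

/-- `T = ∇φ` is a Brenier map sending the standard Gaussian onto `μ` if `φ` is convex,
differentiable, and the pushforward of `γ` under `∇φ` is `μ`. -/
def IsBrenierPotential {d : ℕ} (φ : EuclideanSpace ℝ (Fin d) → ℝ)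
    (μ : Measure (EuclideanSpace ℝ (Fin d))) : Prop :=
  ConvexOn ℝ Set.univ φ ∧ Differentiable ℝ φ ∧
    Measure.map (gradient φ) (stdGaussian d) = μ

/-- `μ` satisfies an exponential concentration inequality with constant `α`: for every
`1`-Lipschitz `f` and every `r ≥ 0`, `μ({f ≥ ∫ f dμ + r}) ≤ exp(-α r)`. -/
def ExponentialConcentration {d : ℕ} (μ : Measure (EuclideanSpace ℝ (Fin d))) (α : ℝ) : Prop :=
  ∀ f : EuclideanSpace ℝ (Fin d) → ℝ, LipschitzWith 1 f → ∀ r : ℝ, 0 ≤ r →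
    μ {x | (∫ y, f y ∂μ) + r ≤ f x} ≤ ENNReal.ofReal (Real.exp (-α * r))

/-!
Write `T = ∇φ`. Testing exponential concentration on the coordinates of the centered measure `μ`
bounds its first moment: `∫ ‖z‖ dμ ≤ 2d/α`. Since `T` is monotone, `‖T‖ ≥ ‖T x‖ / 3` on the whole
ball of radius `√d` around `x + 2√d · T x / ‖T x‖`. This ball has Gaussian mass at least
`exp (-(‖x‖² + 10d))`, and `T` maps it into `{‖z‖ ≥ ‖T x‖ / 3}`, whose `μ`-mass is at most
`exp (-α (‖T x‖ / 3 - ∫ ‖z‖ dμ))` by concentration of the norm. Comparing the two masses gives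
`‖T x‖ ≤ (3 / α) (‖x‖² + 12d)`.
-/

open Set Metric

section InnerProductSpace

variable {E : Type*} [NormedAddCommGroup E] [InnerProductSpace ℝ E]

theorem ConvexOn.inner_gradient_sub_gradient_nonneg [CompleteSpace E] {φ : E → ℝ}
    (hφc : ConvexOn ℝ univ φ) (hφd : Differentiable ℝ φ) (x y : E) :
    0 ≤ ⟪gradient φ x - gradient φ y, x - y⟫ := by
  have hderiv : ∀ t : ℝ, HasDerivAt (φ ∘ AffineMap.lineMap y x)
      ⟪gradient φ (AffineMap.lineMap y x t), x - y⟫ t := fun t => by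
    have := (hφd _).hasGradientAt.hasFDerivAt.comp_hasDerivAt t
      (AffineMap.hasDerivAt_lineMap (a := y) (b := x) (x := t))
    simpa using this
  have hmono := (hφc.comp_affineMap (AffineMap.lineMap y x)).monotoneOn_deriv
    fun t _ => (hderiv t).differentiableAt
  have h01 := hmono (mem_univ 0) (mem_univ 1) zero_le_one
  rw [(hderiv 0).deriv, (hderiv 1).deriv, AffineMap.lineMap_apply_zero,
    AffineMap.lineMap_apply_one] at h01
  rw [inner_sub_left]
  linarith

theorem norm_le_three_mul_norm_of_mem_closedBall {T : E → E}
    (hT : ∀ x y, 0 ≤ ⟪T x - T y, x - y⟫) {s : ℝ} (hs : 0 < s) (x : E) {y : E}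
    (hy : y ∈ closedBall (x + (2 * s / ‖T x‖) • T x) s) :
    ‖T x‖ ≤ 3 * ‖T y‖ := by
  rcases eq_or_lt_of_le (norm_nonneg (T x)) with hR | hR
  · rw [← hR]; positivity
  set u := y - (x + (2 * s / ‖T x‖) • T x)
  have hu : ‖u‖ ≤ s := by rwa [mem_closedBall, dist_eq_norm] at hy
  have hyx : y - x = u + (2 * s / ‖T x‖) • T x := by simp only [u]; abel
  have hstep : ‖(2 * s / ‖T x‖) • T x‖ = 2 * s := by
    rw [norm_smul, Real.norm_of_nonneg (by positivity), div_mul_cancel₀ _ hR.ne']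
  have hlower : s * ‖T x‖ ≤ ⟪T x, y - x⟫ := by
    have hinner : ⟪T x, (2 * s / ‖T x‖) • T x⟫ = 2 * s * ‖T x‖ := by
      rw [real_inner_smul_right, real_inner_self_eq_norm_sq]; field_simp
    have hcs : -(‖T x‖ * s) ≤ ⟪T x, u⟫ := by
      have := neg_le_of_abs_le (abs_real_inner_le_norm (T x) u)
      nlinarith [mul_le_mul_of_nonneg_left hu (norm_nonneg (T x))]
    rw [hyx, inner_add_right, hinner]
    linarith
  have hupper : ⟪T y, y - x⟫ ≤ 3 * s * ‖T y‖ := by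
    have hdist : ‖y - x‖ ≤ 3 * s := by
      rw [hyx]; linarith [norm_add_le u ((2 * s / ‖T x‖) • T x)]
    calc ⟪T y, y - x⟫ ≤ ‖T y‖ * ‖y - x‖ := real_inner_le_norm _ _
      _ ≤ ‖T y‖ * (3 * s) := by gcongr
      _ = 3 * s * ‖T y‖ := by ring
  have hmono : ⟪T x, y - x⟫ ≤ ⟪T y, y - x⟫ := by
    have := hT y x
    rwa [inner_sub_left, sub_nonneg] at this
  nlinarith

theorem measurable_gradient [CompleteSpace E] [MeasurableSpace E] [BorelSpace E] (φ : E → ℝ) :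
    Measurable (gradient φ) :=
  (InnerProductSpace.toDual ℝ E).symm.continuous.measurable.comp (measurable_fderiv ℝ φ)

end InnerProductSpace

theorem EuclideanSpace.norm_le_sum_abs {ι : Type*} [Fintype ι] (z : EuclideanSpace ℝ ι) :
    ‖z‖ ≤ ∑ i, |z i| := by
  classical
  calc ‖z‖ = ‖∑ i, z i • EuclideanSpace.basisFun ι ℝ i‖ := by
        conv_lhs => rw [← (EuclideanSpace.basisFun ι ℝ).sum_repr z]
        simp only [EuclideanSpace.basisFun_repr]
    _ ≤ ∑ i, ‖z i • EuclideanSpace.basisFun ι ℝ i‖ := norm_sum_le _ _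
    _ = ∑ i, |z i| := by simp [norm_smul]

theorem EuclideanSpace.lipschitzWith_apply {ι : Type*} [Fintype ι] (i : ι) :
    LipschitzWith 1 fun z : EuclideanSpace ℝ ι => z i :=
  LipschitzWith.of_dist_le_mul fun z w => by simpa using PiLp.dist_apply_le z w i

theorem EuclideanSpace.ofReal_two_mul_pow_le_volume_closedBall {ι : Type*} [Fintype ι]
    (p : EuclideanSpace ℝ ι) {r : ℝ} (hr : 0 ≤ r) :
    ENNReal.ofReal ((2 * r) ^ Fintype.card ι) ≤
      volume (closedBall p (√(Fintype.card ι) * r)) := by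
  rw [← Real.volume_pi_closedBall (WithLp.ofLp p) hr,
    ← (PiLp.volume_preserving_toLp ι).measure_preimage measurableSet_closedBall.nullMeasurableSet]
  refine measure_mono fun v hv => ?_
  have := (PiLp.lipschitzWith_toLp 2 (fun _ : ι => ℝ)).mapsTo_closedBall (WithLp.ofLp p) r hv
  simpa [Real.sqrt_eq_rpow] using this

namespace ExponentialConcentration

variable {d : ℕ} {μ : Measure (EuclideanSpace ℝ (Fin d))} {α : ℝ}
  {f : EuclideanSpace ℝ (Fin d) → ℝ}

theorem measure_lt_abs_sub_integral_le (hμ : ExponentialConcentration μ α)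
    (hf : LipschitzWith 1 f) {t : ℝ} (ht : 0 ≤ t) :
    μ {z | t < |f z - ∫ y, f y ∂μ|} ≤ ENNReal.ofReal (2 * exp (-α * t)) := by
  have hsub : {z | t < |f z - ∫ y, f y ∂μ|} ⊆
      {z | (∫ y, f y ∂μ) + t ≤ f z} ∪ {z | (∫ y, -f y ∂μ) + t ≤ -f z} := by
    intro z (hz : t < |f z - ∫ y, f y ∂μ|)
    rw [integral_neg]
    rcases lt_abs.mp hz with hz | hz
    · left; show (∫ y, f y ∂μ) + t ≤ f z; linarith
    · right; show -(∫ y, f y ∂μ) + t ≤ -f z; linarith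
  calc μ {z | t < |f z - ∫ y, f y ∂μ|}
      ≤ μ {z | (∫ y, f y ∂μ) + t ≤ f z} + μ {z | (∫ y, -f y ∂μ) + t ≤ -f z} :=
        (measure_mono hsub).trans (measure_union_le _ _)
    _ ≤ ENNReal.ofReal (exp (-α * t)) + ENNReal.ofReal (exp (-α * t)) :=
        add_le_add (hμ f hf t ht) (hμ _ hf.neg t ht)
    _ = ENNReal.ofReal (2 * exp (-α * t)) := by
        rw [two_mul, ENNReal.ofReal_add (exp_pos _).le (exp_pos _).le]

theorem lintegral_abs_sub_integral_le (hμ : ExponentialConcentration μ α) (hα : 0 < α)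
    (hf : LipschitzWith 1 f) :
    ∫⁻ z, ENNReal.ofReal |f z - ∫ y, f y ∂μ| ∂μ ≤ ENNReal.ofReal (2 / α) := by
  have hexp : IntegrableOn (fun t => 2 * exp (-α * t)) (Ioi 0) :=
    (exp_neg_integrableOn_Ioi 0 hα).const_mul 2
  have hint : ∫ t in Ioi (0 : ℝ), 2 * exp (-α * t) = 2 / α := by
    rw [integral_const_mul, integral_exp_mul_Ioi (neg_lt_zero.mpr hα), mul_zero, exp_zero]
    field_simp
  have hcont : Continuous fun z => |f z - ∫ y, f y ∂μ| := (hf.continuous.sub continuous_const).abs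
  rw [lintegral_eq_lintegral_meas_lt μ (ae_of_all _ fun _ => abs_nonneg _) hcont.aemeasurable,
    ← hint,
    ofReal_integral_eq_lintegral_ofReal hexp (ae_of_all _ fun _ => by positivity)]
  exact setLIntegral_mono (by fun_prop) fun t ht =>
    hμ.measure_lt_abs_sub_integral_le hf (le_of_lt ht)

theorem integrable_of_lipschitzWith [IsFiniteMeasure μ] (hμ : ExponentialConcentration μ α)
    (hα : 0 < α) (hf : LipschitzWith 1 f) : Integrable f μ := by
  have habs : Integrable (fun z => |f z - ∫ y, f y ∂μ|) μ :=
    ⟨(hf.continuous.sub continuous_const).abs.aestronglyMeasurable,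
      (hasFiniteIntegral_iff_ofReal (ae_of_all _ fun _ => abs_nonneg _)).2
        ((hμ.lintegral_abs_sub_integral_le hα hf).trans_lt ENNReal.ofReal_lt_top)⟩
  have hcentered : Integrable (fun z => f z - ∫ y, f y ∂μ) μ :=
    habs.mono' (hf.continuous.sub continuous_const).aestronglyMeasurable
      (ae_of_all _ fun _ => le_of_eq (Real.norm_eq_abs _))
  exact (hcentered.add (integrable_const _)).congr (ae_of_all _ fun _ => sub_add_cancel _ _)

theorem integral_abs_sub_integral_le (hμ : ExponentialConcentration μ α) (hα : 0 < α)
    (hf : LipschitzWith 1 f) :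
    ∫ z, |f z - ∫ y, f y ∂μ| ∂μ ≤ 2 / α := by
  have hcont : Continuous fun z => |f z - ∫ y, f y ∂μ| := (hf.continuous.sub continuous_const).abs
  rw [integral_eq_lintegral_of_nonneg_ae (ae_of_all _ fun _ => abs_nonneg _)
    hcont.aestronglyMeasurable]
  exact ENNReal.toReal_le_of_le_ofReal (by positivity)
    (hμ.lintegral_abs_sub_integral_le hα hf)

theorem integral_norm_le [IsProbabilityMeasure μ] (hμ : ExponentialConcentration μ α)
    (hα : 0 < α) (hcent : IsCentered μ) :
    ∫ z, ‖z‖ ∂μ ≤ 2 * d / α := by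
  have hcoord := EuclideanSpace.lipschitzWith_apply (ι := Fin d)
  have hnorm : Integrable (fun z => ‖z‖) μ :=
    hμ.integrable_of_lipschitzWith hα lipschitzWith_one_norm
  have hmean : ∀ i, ∫ z, z i ∂μ = 0 := fun i => by
    have := (EuclideanSpace.proj i).integral_comp_comm
      ((integrable_norm_iff aestronglyMeasurable_id).1 hnorm)
    simpa [show ∫ z, z ∂μ = 0 from hcent] using this
  have habs : ∀ i, Integrable (fun z : EuclideanSpace ℝ (Fin d) => |z i|) μ := fun i =>
    (hμ.integrable_of_lipschitzWith hα (hcoord i)).abs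
  calc ∫ z, ‖z‖ ∂μ ≤ ∫ z, ∑ i, |z i| ∂μ :=
        integral_mono hnorm (integrable_finsetSum _ fun i _ => habs i)
          EuclideanSpace.norm_le_sum_abs
    _ = ∑ i, ∫ z, |z i| ∂μ := integral_finsetSum _ fun i _ => habs i
    _ ≤ ∑ _i : Fin d, 2 / α := Finset.sum_le_sum fun i _ => by
        simpa [hmean i] using hμ.integral_abs_sub_integral_le hα (hcoord i)
    _ = 2 * d / α := by simp; ring

end ExponentialConcentration

theorem exp_neg_le_two_mul_pi_rpow (d : ℕ) : exp (-d) ≤ (2 * π) ^ (-(d : ℝ) / 2) := by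
  have hlog : log (2 * π) ≤ 2 := by
    rw [log_le_iff_le_exp (by positivity), show (2 : ℝ) = 1 + 1 by norm_num, exp_add]
    nlinarith [pi_lt_d2, exp_one_gt_d9]
  rw [rpow_def_of_pos (by positivity), exp_le_exp]
  nlinarith [(Nat.cast_nonneg d : (0 : ℝ) ≤ d)]

theorem ofReal_exp_le_stdGaussian_closedBall {d : ℕ} (p : EuclideanSpace ℝ (Fin d)) :
    ENNReal.ofReal (exp (-(d + (‖p‖ + √d) ^ 2 / 2))) ≤ stdGaussian d (closedBall p √d) := by
  set c := (2 * π) ^ (-(d : ℝ) / 2) * exp (-(‖p‖ + √d) ^ 2 / 2)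
  have hdens : ∀ y ∈ closedBall p √d, ENNReal.ofReal c ≤
      ENNReal.ofReal ((2 * π) ^ (-(d : ℝ) / 2) * exp (-‖y‖ ^ 2 / 2)) := fun y hy => by
    have hy' : ‖y‖ ≤ ‖p‖ + √d := by
      rw [mem_closedBall, dist_eq_norm] at hy
      linarith [norm_le_norm_add_norm_sub' y p]
    simp only [c]
    gcongr
  have hvol : 1 ≤ volume (closedBall p √d) := by
    have := EuclideanSpace.ofReal_two_mul_pow_le_volume_closedBall p zero_le_one
    rw [Fintype.card_fin, mul_one, mul_one] at this
    exact (ENNReal.one_le_ofReal.2 (one_le_pow₀ one_le_two)).trans this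
  calc ENNReal.ofReal (exp (-(d + (‖p‖ + √d) ^ 2 / 2)))
      ≤ ENNReal.ofReal c := by
        rw [neg_add, exp_add, ← neg_div]
        simp only [c]
        gcongr
        exact exp_neg_le_two_mul_pi_rpow d
    _ ≤ ENNReal.ofReal c * volume (closedBall p √d) := le_mul_of_one_le_right' hvol
    _ = ∫⁻ _ in closedBall p √d, ENNReal.ofReal c := (setLIntegral_const _ _).symm
    _ ≤ ∫⁻ y in closedBall p √d, ENNReal.ofReal ((2 * π) ^ (-(d : ℝ) / 2) * exp (-‖y‖ ^ 2 / 2)) :=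
        setLIntegral_mono (by fun_prop) hdens
    _ = stdGaussian d (closedBall p √d) := (withDensity_apply _ measurableSet_closedBall).symm

namespace IsBrenierPotential

variable {d : ℕ} {μ : Measure (EuclideanSpace ℝ (Fin d))} {φ : EuclideanSpace ℝ (Fin d) → ℝ}

theorem stdGaussian_le_of_subset_preimage (hφ : IsBrenierPotential φ μ)
    {s t : Set (EuclideanSpace ℝ (Fin d))} (ht : MeasurableSet t) (hst : s ⊆ gradient φ ⁻¹' t) :
    stdGaussian d s ≤ μ t := by
  rw [← hφ.2.2, Measure.map_apply (measurable_gradient φ) ht]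
  exact measure_mono hst

theorem norm_gradient_le (hφ : IsBrenierPotential φ μ) {α : ℝ}
    (hμ : ExponentialConcentration μ α) (hα : 0 < α) (x : EuclideanSpace ℝ (Fin d)) :
    ‖gradient φ x‖ ≤ 3 * (∫ z, ‖z‖ ∂μ + (‖x‖ ^ 2 + 10 * d) / α) := by
  have hm : 0 ≤ ∫ z, ‖z‖ ∂μ := integral_nonneg fun z => norm_nonneg z
  have hK : 0 ≤ (‖x‖ ^ 2 + 10 * d) / α := by positivity
  rcases Nat.eq_zero_or_pos d with rfl | hd
  · rw [Subsingleton.elim (gradient φ x) 0, norm_zero]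
    positivity
  set T := gradient φ
  set m := ∫ z, ‖z‖ ∂μ
  by_contra! hlt
  set r := ‖T x‖ / 3 - m with hr_def
  have hr : (‖x‖ ^ 2 + 10 * d) / α < r := by rw [hr_def]; linarith
  have hTx : 0 < ‖T x‖ := by linarith
  set p := x + (2 * √d / ‖T x‖) • T x
  have hball : closedBall p √d ⊆ T ⁻¹' {z | m + r ≤ ‖z‖} := fun y hy => by
    have := norm_le_three_mul_norm_of_mem_closedBall
      (hφ.1.inner_gradient_sub_gradient_nonneg hφ.2.1) (by positivity) x hy
    show m + r ≤ ‖T y‖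
    rw [hr_def]
    linarith
  have hp : ‖p‖ ≤ ‖x‖ + 2 * √d := by
    refine (norm_add_le _ _).trans_eq ?_
    rw [norm_smul, Real.norm_of_nonneg (by positivity), div_mul_cancel₀ _ hTx.ne']
  have hexp : exp (-(‖x‖ ^ 2 + 10 * d)) ≤ exp (-α * r) := by
    rw [← ENNReal.ofReal_le_ofReal_iff (exp_pos _).le]
    calc ENNReal.ofReal (exp (-(‖x‖ ^ 2 + 10 * d)))
        ≤ ENNReal.ofReal (exp (-(d + (‖p‖ + √d) ^ 2 / 2))) := by
          refine ENNReal.ofReal_le_ofReal (exp_le_exp.2 ?_)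
          nlinarith [sq_nonneg (‖x‖ - 3 * √d), Real.sq_sqrt (Nat.cast_nonneg d (α := ℝ)),
            norm_nonneg p, Real.sqrt_nonneg d]
      _ ≤ stdGaussian d (closedBall p √d) := ofReal_exp_le_stdGaussian_closedBall p
      _ ≤ μ {z | m + r ≤ ‖z‖} :=
          hφ.stdGaussian_le_of_subset_preimage (measurableSet_le measurable_const measurable_norm)
            hball
      _ ≤ ENNReal.ofReal (exp (-α * r)) := hμ _ lipschitzWith_one_norm r (hK.trans hr.le)
  rw [exp_le_exp] at hexp
  rw [div_lt_iff₀ hα] at hr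
  linarith

end IsBrenierPotential

/-- If `μ` is a centered probability measure on `ℝ^d` satisfying exponential concentration
with constant `α > 0` and `T = ∇φ` is a Brenier map sending the standard Gaussian onto `μ`,
then `|T(x)| ≤ max(12/α, 8) (|x|² + 17 d)` for every `x`. -/
theorem statement_2 {d : ℕ} (μ : Measure (EuclideanSpace ℝ (Fin d)))
    [IsProbabilityMeasure μ] (hcent : IsCentered μ) (α : ℝ) (hα : 0 < α)
    (hconc : ExponentialConcentration μ α)
    (φ : EuclideanSpace ℝ (Fin d) → ℝ) (hφ : IsBrenierPotential φ μ)
    (x : EuclideanSpace ℝ (Fin d)) :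
    ‖gradient φ x‖ ≤ max (12 / α) 8 * (‖x‖ ^ 2 + 17 * d) := by
  calc ‖gradient φ x‖ ≤ 3 * (∫ z, ‖z‖ ∂μ + (‖x‖ ^ 2 + 10 * d) / α) :=
        hφ.norm_gradient_le hconc hα x
    _ ≤ 3 * (2 * d / α + (‖x‖ ^ 2 + 10 * d) / α) := by
        gcongr
        exact hconc.integral_norm_le hα hcent
    _ ≤ 12 / α * (‖x‖ ^ 2 + 17 * d) := by
        rw [← add_div, mul_div_assoc', div_mul_eq_mul_div, div_le_div_iff_of_pos_right hα]
        nlinarith [sq_nonneg ‖x‖, (Nat.cast_nonneg d : (0 : ℝ) ≤ d)]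
    _ ≤ max (12 / α) 8 * (‖x‖ ^ 2 + 17 * d) := by
        gcongr
        exact le_max_left _ _
end
end

section
/- Suppose d ≥ 1 and let μ be a centered probability measure on ℝ^d with ∫ |z| dμ(z) ≤ √d. Let x, a ∈ ℝ^d satisfy |a| ≥ 8(1 + |x|²) and |a| ≥ 6√d, and set u = (a - x)/|a - x|. Then ∫ ( ⟨z - a, u⟩ + |z - a|/2 ) dμ(z) ≤ - |a| / 8. -/
/-!
Since `μ` is centered, the linear part integrates to `-⟪a, u⟫`, and because `x` is small compared
with `a`, the direction `u` is close to that of `a`, so `⟪a, u⟫ ≥ 7|a|/9`. The norm part is at most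
`(∫ |z| dμ + |a|)/2 ≤ (|a|/6 + |a|)/2 = 7|a|/12`, and `-7/9 + 7/12 = -7/36 ≤ -1/8`.
-/

open MeasureTheory
open scoped RealInnerProductSpace ENNReal

section FirstMoment

variable {E : Type*} [NormedAddCommGroup E] [MeasurableSpace E] [OpensMeasurableSpace E]
  [SecondCountableTopology E] {μ : Measure E} {c : ℝ}

theorem integrable_id_of_lintegral_norm_le
    (h : ∫⁻ z, ENNReal.ofReal ‖z‖ ∂μ ≤ ENNReal.ofReal c) : Integrable (fun z => z) μ := by
  refine ⟨aestronglyMeasurable_id, ?_⟩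
  simp_rw [HasFiniteIntegral, ← ofReal_norm]
  exact h.trans_lt ENNReal.ofReal_lt_top

theorem integral_norm_le_of_lintegral_norm_le (hc : 0 ≤ c)
    (h : ∫⁻ z, ENNReal.ofReal ‖z‖ ∂μ ≤ ENNReal.ofReal c) : ∫ z, ‖z‖ ∂μ ≤ c := by
  rw [integral_eq_lintegral_of_nonneg_ae (.of_forall fun z => norm_nonneg z)
    aestronglyMeasurable_id.norm]
  exact ENNReal.toReal_le_of_le_ofReal hc h

end FirstMoment

theorem integral_inner_sub_const_of_centered {E : Type*} [NormedAddCommGroup E]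
    [InnerProductSpace ℝ E] [CompleteSpace E] [MeasurableSpace E] {μ : Measure E}
    [IsProbabilityMeasure μ] (hμ : Integrable (fun z => z) μ) (hcent : ∫ z, z ∂μ = 0) (a v : E) :
    ∫ z, ⟪z - a, v⟫ ∂μ = -⟪a, v⟫ := by
  have hint : ∫ z, (z - a) ∂μ = -a := by
    rw [integral_sub hμ (integrable_const a), hcent, integral_const]
    simp
  simp_rw [real_inner_comm v]
  rw [integral_inner (f := fun z => z - a) (hμ.sub (integrable_const a)), hint, inner_neg_right]

theorem integral_norm_sub_const_le {E : Type*} [NormedAddCommGroup E] [MeasurableSpace E]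
    {μ : Measure E} [IsProbabilityMeasure μ] (hμ : Integrable (fun z => z) μ) (a : E) :
    ∫ z, ‖z - a‖ ∂μ ≤ ∫ z, ‖z‖ ∂μ + ‖a‖ := by
  calc ∫ z, ‖z - a‖ ∂μ ≤ ∫ z, (‖z‖ + ‖a‖) ∂μ :=
        integral_mono (hμ.sub (integrable_const a)).norm (hμ.norm.add (integrable_const _))
          fun z => norm_sub_le z a
    _ = ∫ z, ‖z‖ ∂μ + ‖a‖ := by
        rw [integral_add hμ.norm (integrable_const _), integral_const]
        simp

theorem le_inner_normalize_sub_of_eight_mul_norm_le {E : Type*} [NormedAddCommGroup E]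
    [InnerProductSpace ℝ E]
    {a x : E} (hx : 8 * ‖x‖ ≤ ‖a‖) : 7 / 9 * ‖a‖ ≤ ⟪a, ‖a - x‖⁻¹ • (a - x)⟫ := by
  have hinner : 7 / 8 * ‖a‖ ^ 2 ≤ ⟪a, a - x⟫ := by
    rw [inner_sub_right, real_inner_self_eq_norm_sq]
    nlinarith [real_inner_le_norm a x, norm_nonneg x]
  have hub : ‖a - x‖ ≤ 9 / 8 * ‖a‖ := by linarith [norm_sub_le a x]
  rcases (norm_nonneg (a - x)).eq_or_lt with h0 | hpos
  · have : a = 0 := norm_eq_zero.mp (by linarith [norm_sub_norm_le a x, norm_nonneg a])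
    simp [this]
  rw [real_inner_smul_right, inv_mul_eq_div, le_div_iff₀ hpos]
  nlinarith [norm_nonneg a]

theorem statement_9_general {d : ℕ} (μ : Measure (EuclideanSpace ℝ (Fin d)))
    [IsProbabilityMeasure μ] (hcent : ∫ z, z ∂μ = 0)
    (hmom : ∫⁻ z, ENNReal.ofReal ‖z‖ ∂μ ≤ ENNReal.ofReal (Real.sqrt d))
    (x a : EuclideanSpace ℝ (Fin d))
    (ha1 : 8 * (1 + ‖x‖ ^ 2) ≤ ‖a‖) (ha2 : 6 * Real.sqrt d ≤ ‖a‖) :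
    ∫ z, (⟪z - a, ‖a - x‖⁻¹ • (a - x)⟫ + ‖z - a‖ / 2) ∂μ ≤ -(‖a‖ / 8) := by
  set u := ‖a - x‖⁻¹ • (a - x)
  have hμ := integrable_id_of_lintegral_norm_le hmom
  have hM := integral_norm_le_of_lintegral_norm_le (Real.sqrt_nonneg _) hmom
  have hu : 7 / 9 * ‖a‖ ≤ ⟪a, u⟫ :=
    le_inner_normalize_sub_of_eight_mul_norm_le (by nlinarith [sq_nonneg (‖x‖ - 1)])
  have hlin : Integrable (fun z => ⟪z - a, u⟫) μ :=
    (hμ.sub (integrable_const a)).inner_const u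
  have hnorm : Integrable (fun z => ‖z - a‖ / 2) μ :=
    (hμ.sub (integrable_const a)).norm.div_const 2
  rw [integral_add hlin hnorm, integral_inner_sub_const_of_centered hμ hcent, integral_div]
  linarith [integral_norm_sub_const_le hμ a, norm_nonneg a]

/-- If `d ≥ 1`, `μ` is a centered probability measure on `ℝ^d` with first moment
`∫ |z| dμ ≤ √d`, and `x, a` satisfy `|a| ≥ 8(1 + |x|²)` and `|a| ≥ 6√d`, then with
`u = (a - x)/|a - x|` one has `∫ (⟨z - a, u⟩ + |z - a|/2) dμ(z) ≤ -|a|/8`. -/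
theorem statement_9 {d : ℕ} (hd : 1 ≤ d) (μ : Measure (EuclideanSpace ℝ (Fin d)))
    [IsProbabilityMeasure μ] (hcent : ∫ z, z ∂μ = 0)
    (hmom : ∫⁻ z, ENNReal.ofReal ‖z‖ ∂μ ≤ ENNReal.ofReal (Real.sqrt d))
    (x a : EuclideanSpace ℝ (Fin d))
    (ha1 : 8 * (1 + ‖x‖ ^ 2) ≤ ‖a‖) (ha2 : 6 * Real.sqrt d ≤ ‖a‖) :
    ∫ z, (⟪z - a, ‖a - x‖⁻¹ • (a - x)⟫ + ‖z - a‖ / 2) ∂μ ≤ -(‖a‖ / 8) :=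
  statement_9_general μ hcent hmom x a ha1 ha2
end

section
/- Let γ be the standard Gaussian measure on ℝ^d with d ≥ 1. Then for every a ∈ ℝ^d, γ( B(a, 2√d) ) ≥ (3/4) e^{-|a|²/2}, where B(a, r) denotes the closed Euclidean ball of center a and radius r. -/
open MeasureTheory Real
open scoped ENNReal

noncomputable section

/-!
Write `φ` for the Gaussian density. Expanding the squares,
`φ (a + y) + φ (a - y) = 2 e^{-|a|²/2} φ y cosh ⟪a, y⟫ ≥ 2 e^{-|a|²/2} φ y`,
so integrating over a centrally symmetric set `S` (and using `y ↦ -y` to identify the two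
translates) gives `γ (a + S) ≥ e^{-|a|²/2} γ S`. For `S = B(0, 2√d)`, Chebyshev's inequality with
the second moment `∫ |x|² dγ = d`, computed in polar coordinates, gives `γ Sᶜ ≤ d / (4d) = 1/4`.
-/

open Set Metric
open scoped Pointwise

theorem integral_Ioi_rpow_mul_exp_neg_sq_div_two {s : ℝ} (hs : -1 < s) :
    ∫ y in Ioi (0 : ℝ), y ^ s * exp (-y ^ 2 / 2) = 2 ^ ((s - 1) / 2) * Gamma ((s + 1) / 2) := by
  have h := integral_rpow_mul_exp_neg_mul_rpow two_pos hs (by norm_num : (0 : ℝ) < 1 / 2)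
  rw [one_div, inv_rpow zero_le_two, ← rpow_neg zero_le_two, neg_div, neg_neg] at h
  calc ∫ y in Ioi (0 : ℝ), y ^ s * exp (-y ^ 2 / 2)
      = ∫ y in Ioi (0 : ℝ), y ^ s * exp (-2⁻¹ * y ^ (2 : ℝ)) := by
        simp_rw [rpow_two, neg_div, neg_mul, inv_mul_eq_div]
    _ = 2 ^ ((s + 1) / 2) * 2⁻¹ * Gamma ((s + 1) / 2) := h
    _ = 2 ^ ((s - 1) / 2) * Gamma ((s + 1) / 2) := by
        rw [show (s + 1) / 2 = (s - 1) / 2 + 1 by ring, rpow_add_one two_ne_zero]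
        ring

theorem integral_Ioi_pow_mul_sq_mul_exp_neg_sq_div_two (m : ℕ) :
    ∫ y in Ioi (0 : ℝ), y ^ m * (y ^ 2 * exp (-y ^ 2 / 2)) =
      (m + 1) * ∫ y in Ioi (0 : ℝ), y ^ m * exp (-y ^ 2 / 2) := by
  have hm : (-1 : ℝ) < m := by linarith [m.cast_nonneg (α := ℝ)]
  have hpow (y : ℝ) :
      y ^ m * (y ^ 2 * exp (-y ^ 2 / 2)) = y ^ ((m + 2 : ℕ) : ℝ) * exp (-y ^ 2 / 2) := by
    rw [rpow_natCast, pow_add]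
    ring
  simp_rw [hpow, ← rpow_natCast _ m]
  rw [integral_Ioi_rpow_mul_exp_neg_sq_div_two (by push_cast; linarith),
    integral_Ioi_rpow_mul_exp_neg_sq_div_two hm]
  push_cast
  rw [show ((m : ℝ) + 2 - 1) / 2 = (m - 1) / 2 + 1 by ring,
    show ((m : ℝ) + 2 + 1) / 2 = (m + 1) / 2 + 1 by ring,
    rpow_add_one two_ne_zero, Gamma_add_one (by positivity)]
  ring

theorem two_mul_exp_mul_exp_le {F : Type*} [NormedAddCommGroup F] [InnerProductSpace ℝ F]
    (a y : F) :
    2 * (exp (-‖a‖ ^ 2 / 2) * exp (-‖y‖ ^ 2 / 2)) ≤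
      exp (-‖a + y‖ ^ 2 / 2) + exp (-‖a - y‖ ^ 2 / 2) := by
  have hplus : exp (-‖a + y‖ ^ 2 / 2) =
      exp (-‖a‖ ^ 2 / 2) * exp (-‖y‖ ^ 2 / 2) * exp (-inner ℝ a y) := by
    rw [norm_add_sq_real, ← exp_add, ← exp_add]; ring_nf
  have hminus : exp (-‖a - y‖ ^ 2 / 2) =
      exp (-‖a‖ ^ 2 / 2) * exp (-‖y‖ ^ 2 / 2) * exp (inner ℝ a y) := by
    rw [norm_sub_sq_real, ← exp_add, ← exp_add]; ring_nf
  have hsum : exp (-‖a + y‖ ^ 2 / 2) + exp (-‖a - y‖ ^ 2 / 2) =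
      2 * (exp (-‖a‖ ^ 2 / 2) * exp (-‖y‖ ^ 2 / 2)) * cosh (inner ℝ a y) := by
    rw [hplus, hminus, cosh_eq]; ring
  rw [hsum]
  exact le_mul_of_one_le_right (by positivity) (one_le_cosh _)

theorem integral_norm_sq_mul_exp_neg_norm_sq_div_two {E : Type*} [NormedAddCommGroup E]
    [NormedSpace ℝ E] [FiniteDimensional ℝ E] [Nontrivial E] [MeasurableSpace E] [BorelSpace E]
    (μ : Measure E) [μ.IsAddHaarMeasure] :
    ∫ x, ‖x‖ ^ 2 * exp (-‖x‖ ^ 2 / 2) ∂μ = Module.finrank ℝ E * ∫ x, exp (-‖x‖ ^ 2 / 2) ∂μ := by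
  obtain ⟨m, hm⟩ := Nat.exists_eq_add_of_lt (Module.finrank_pos (R := ℝ) (M := E))
  rw [integral_fun_norm_addHaar μ (fun r => r ^ 2 * exp (-r ^ 2 / 2)),
    integral_fun_norm_addHaar μ (fun r => exp (-r ^ 2 / 2)), hm]
  simp only [zero_add, add_tsub_cancel_right, smul_eq_mul, nsmul_eq_mul,
    integral_Ioi_pow_mul_sq_mul_exp_neg_sq_div_two]
  push_cast
  ring

section

variable {d : ℕ}

def stdGaussianDensity (d : ℕ) (x : EuclideanSpace ℝ (Fin d)) : ℝ :=
  (2 * π) ^ (-(d : ℝ) / 2) * exp (-‖x‖ ^ 2 / 2)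

theorem stdGaussian_eq_withDensity :
    stdGaussian d = volume.withDensity fun x => ENNReal.ofReal (stdGaussianDensity d x) :=
  rfl

theorem stdGaussianDensity_nonneg (x : EuclideanSpace ℝ (Fin d)) : 0 ≤ stdGaussianDensity d x := by
  unfold stdGaussianDensity; positivity

theorem measurable_stdGaussianDensity : Measurable (stdGaussianDensity d) := by
  unfold stdGaussianDensity; fun_prop

theorem integral_exp_neg_norm_sq_div_two :
    ∫ x : EuclideanSpace ℝ (Fin d), exp (-‖x‖ ^ 2 / 2) = (2 * π) ^ ((d : ℝ) / 2) := by
  have h := GaussianFourier.integral_rexp_neg_mul_sq_norm (V := EuclideanSpace ℝ (Fin d))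
    (by norm_num : (0 : ℝ) < 1 / 2)
  rw [finrank_euclideanSpace_fin, show π / (1 / 2) = 2 * π by ring] at h
  simpa only [neg_mul, one_div, inv_mul_eq_div, neg_div] using h

theorem integral_stdGaussianDensity : ∫ x, stdGaussianDensity d x = 1 := by
  simp_rw [stdGaussianDensity]
  rw [integral_const_mul, integral_exp_neg_norm_sq_div_two,
    ← rpow_add (by positivity), neg_div, neg_add_cancel, rpow_zero]

instance isProbabilityMeasure_stdGaussian : IsProbabilityMeasure (stdGaussian d) := by
  refine ⟨?_⟩
  rw [stdGaussian_eq_withDensity, withDensity_apply _ MeasurableSet.univ, Measure.restrict_univ,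
    ← ofReal_integral_eq_lintegral_ofReal
      (.of_integral_ne_zero (by rw [integral_stdGaussianDensity]; exact one_ne_zero))
      (.of_forall stdGaussianDensity_nonneg),
    integral_stdGaussianDensity, ENNReal.ofReal_one]

theorem integral_norm_sq_mul_stdGaussianDensity (hd : 1 ≤ d) :
    ∫ x, ‖x‖ ^ 2 * stdGaussianDensity d x = d := by
  have : Nonempty (Fin d) := ⟨⟨0, hd⟩⟩
  simp_rw [stdGaussianDensity, mul_left_comm (‖_‖ ^ 2)]
  rw [integral_const_mul, integral_norm_sq_mul_exp_neg_norm_sq_div_two,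
    finrank_euclideanSpace_fin, integral_exp_neg_norm_sq_div_two, mul_left_comm,
    ← rpow_add (by positivity), neg_div, neg_add_cancel, rpow_zero, mul_one]

theorem lintegral_norm_sq_stdGaussian (hd : 1 ≤ d) :
    ∫⁻ x, ENNReal.ofReal (‖x‖ ^ 2) ∂stdGaussian d = d := by
  have hint : Integrable fun x => ‖x‖ ^ 2 * stdGaussianDensity d x :=
    .of_integral_ne_zero (by rw [integral_norm_sq_mul_stdGaussianDensity hd]; positivity)
  rw [stdGaussian_eq_withDensity, lintegral_withDensity_eq_lintegral_mul₀
      measurable_stdGaussianDensity.ennreal_ofReal.aemeasurable (by fun_prop),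
    ← ENNReal.ofReal_natCast, ← integral_norm_sq_mul_stdGaussianDensity hd,
    ofReal_integral_eq_lintegral_ofReal hint
      (.of_forall fun x => mul_nonneg (sq_nonneg _) (stdGaussianDensity_nonneg x))]
  refine lintegral_congr fun x => ?_
  rw [Pi.mul_apply, ← ENNReal.ofReal_mul (stdGaussianDensity_nonneg x), mul_comm]

theorem stdGaussian_compl_closedBall_le (hd : 1 ≤ d) {r : ℝ} (hr : 0 < r) :
    stdGaussian d (closedBall 0 r)ᶜ ≤ ENNReal.ofReal (d / r ^ 2) := by
  have hsub : (closedBall (0 : EuclideanSpace ℝ (Fin d)) r)ᶜ ⊆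
      {x | ENNReal.ofReal (r ^ 2) ≤ ENNReal.ofReal (‖x‖ ^ 2)} := fun x hx => by
    rw [mem_compl_iff, mem_closedBall_zero_iff, not_le] at hx
    exact ENNReal.ofReal_le_ofReal (pow_le_pow_left₀ hr.le hx.le 2)
  calc stdGaussian d (closedBall 0 r)ᶜ
      ≤ (∫⁻ x, ENNReal.ofReal (‖x‖ ^ 2) ∂stdGaussian d) / ENNReal.ofReal (r ^ 2) :=
        (measure_mono hsub).trans (meas_ge_le_lintegral_div (by fun_prop)
          (by positivity) ENNReal.ofReal_ne_top)
    _ = ENNReal.ofReal (d / r ^ 2) := by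
        rw [lintegral_norm_sq_stdGaussian hd, ENNReal.ofReal_div_of_pos (by positivity),
          ENNReal.ofReal_natCast]

theorem three_quarters_le_stdGaussian_closedBall (hd : 1 ≤ d) :
    ENNReal.ofReal (3 / 4) ≤ stdGaussian d (closedBall 0 (2 * √d)) := by
  have hd' : (0 : ℝ) < d := by exact_mod_cast hd
  have htail := stdGaussian_compl_closedBall_le hd (by positivity : 0 < 2 * √(d : ℝ))
  rw [mul_pow, sq_sqrt hd'.le, div_mul_cancel_right₀ hd'.ne', show (2 : ℝ) ^ 2 = 4 by norm_num]
    at htail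
  calc ENNReal.ofReal (3 / 4) = 1 - ENNReal.ofReal (4⁻¹) := by
        rw [← ENNReal.ofReal_one, ← ENNReal.ofReal_sub _ (by norm_num)]; norm_num
    _ ≤ 1 - stdGaussian d (closedBall 0 (2 * √d))ᶜ := tsub_le_tsub_left htail 1
    _ = stdGaussian d (closedBall 0 (2 * √d)) := by
        rw [prob_compl_eq_one_sub measurableSet_closedBall,
          ENNReal.sub_sub_cancel ENNReal.one_ne_top prob_le_one]

theorem two_mul_exp_mul_stdGaussianDensity_le (a y : EuclideanSpace ℝ (Fin d)) :
    2 * exp (-‖a‖ ^ 2 / 2) * stdGaussianDensity d y ≤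
      stdGaussianDensity d (a + y) + stdGaussianDensity d (a - y) := by
  have h := mul_le_mul_of_nonneg_left (two_mul_exp_mul_exp_le a y)
    (by positivity : (0 : ℝ) ≤ (2 * π) ^ (-(d : ℝ) / 2))
  unfold stdGaussianDensity
  linarith

theorem ofReal_exp_mul_stdGaussian_le_stdGaussian_vadd {S : Set (EuclideanSpace ℝ (Fin d))}
    (hS : -S = S) (a : EuclideanSpace ℝ (Fin d)) :
    ENNReal.ofReal (exp (-‖a‖ ^ 2 / 2)) * stdGaussian d S ≤ stdGaussian d (a +ᵥ S) := by
  set f : EuclideanSpace ℝ (Fin d) → ℝ≥0∞ := fun x => ENNReal.ofReal (stdGaussianDensity d x)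
  have hplus : stdGaussian d (a +ᵥ S) = ∫⁻ y in S, f (a + y) := by
    rw [stdGaussian_eq_withDensity, withDensity_apply', ← Set.image_vadd,
      (measurePreserving_add_left volume a).setLIntegral_comp_emb (measurableEmbedding_addLeft a)]
    rfl
  have hminus : stdGaussian d (a +ᵥ S) = ∫⁻ y in S, f (a - y) := by
    simp_rw [hplus, sub_eq_add_neg]
    rw [(Measure.measurePreserving_neg volume).setLIntegral_comp_emb
      (MeasurableEquiv.neg _).measurableEmbedding (fun y => f (a + y)), Set.image_neg_eq_neg, hS]
  have hpointwise (y) : 2 * ENNReal.ofReal (exp (-‖a‖ ^ 2 / 2)) * f y ≤ f (a + y) + f (a - y) := by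
    calc 2 * ENNReal.ofReal (exp (-‖a‖ ^ 2 / 2)) * f y
        = ENNReal.ofReal (2 * exp (-‖a‖ ^ 2 / 2) * stdGaussianDensity d y) := by
          rw [ENNReal.ofReal_mul (by positivity), ENNReal.ofReal_mul zero_le_two,
            ENNReal.ofReal_ofNat]
      _ ≤ ENNReal.ofReal (stdGaussianDensity d (a + y) + stdGaussianDensity d (a - y)) :=
          ENNReal.ofReal_le_ofReal (two_mul_exp_mul_stdGaussianDensity_le a y)
      _ = f (a + y) + f (a - y) :=
          ENNReal.ofReal_add (stdGaussianDensity_nonneg _) (stdGaussianDensity_nonneg _)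
  have hf : Measurable f := measurable_stdGaussianDensity.ennreal_ofReal
  refine (ENNReal.mul_le_mul_iff_right two_ne_zero ENNReal.ofNat_ne_top).mp ?_
  calc 2 * (ENNReal.ofReal (exp (-‖a‖ ^ 2 / 2)) * stdGaussian d S)
      = ∫⁻ y in S, 2 * ENNReal.ofReal (exp (-‖a‖ ^ 2 / 2)) * f y := by
        rw [lintegral_const_mul _ hf, stdGaussian_eq_withDensity, withDensity_apply', mul_assoc]
    _ ≤ ∫⁻ y in S, (f (a + y) + f (a - y)) := lintegral_mono hpointwise
    _ = 2 * stdGaussian d (a +ᵥ S) := by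
        rw [lintegral_add_left (f := fun y => f (a + y)) (hf.comp (measurable_const_add a)),
          ← hplus, ← hminus, two_mul]

end

/-- For `d ≥ 1` and any `a ∈ ℝ^d`, the standard Gaussian measure of the closed ball of
center `a` and radius `2√d` is at least `(3/4) e^{-|a|²/2}`. -/
theorem statement_10 {d : ℕ} (hd : 1 ≤ d) (a : EuclideanSpace ℝ (Fin d)) :
    ENNReal.ofReal (3 / 4 * Real.exp (-‖a‖ ^ 2 / 2)) ≤
      stdGaussian d (Metric.closedBall a (2 * Real.sqrt d)) := by
  rw [← vadd_closedBall_zero, mul_comm, ENNReal.ofReal_mul (exp_nonneg _)]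
  calc ENNReal.ofReal (exp (-‖a‖ ^ 2 / 2)) * ENNReal.ofReal (3 / 4)
      ≤ ENNReal.ofReal (exp (-‖a‖ ^ 2 / 2)) * stdGaussian d (closedBall 0 (2 * √d)) := by
        gcongr; exact three_quarters_le_stdGaussian_closedBall hd
    _ ≤ stdGaussian d (a +ᵥ closedBall (0 : EuclideanSpace ℝ (Fin d)) (2 * √d)) :=
        ofReal_exp_mul_stdGaussian_le_stdGaussian_vadd (by rw [neg_closedBall, neg_zero]) a
end
end
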